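/- arXiv:2307.07519 — 5 statements merged into one kernel-verified Lean document; each statement's English description precedes it below -/
import Mathlib

section
/- If I and J are two distinct ideals in C(X), then the U^I-topology on C(X) is different from the U^J-topology. -/
open TopologicalSpace
open scoped ENNReal NNReal

variable {X : Type*}

/-- The (possibly infinite) sup-distance between two continuous functions. -/
noncomputable def supDist [TopologicalSpace X] (f g : C(X, ℝ)) : ℝ≥0∞ :=
  ⨆ x, (‖f x - g x‖₊ : ℝ≥0∞)

/-- Basic set for the `U^I`-topology. -/
def UIball [TopologicalSpace X] (I : Ideal C(X, ℝ)) (f : C(X, ℝ)) (ε : ℝ) :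
    Set C(X, ℝ) :=
  {g | supDist f g < ENNReal.ofReal ε ∧ f - g ∈ I}

/-- The `U^I`-topology on `C(X, ℝ)`. -/
def UItop [TopologicalSpace X] (I : Ideal C(X, ℝ)) : TopologicalSpace C(X, ℝ) :=
  generateFrom {S | ∃ f ε, 0 < ε ∧ S = UIball I f ε}

/-- Basic set for the `m^I`-topology. -/
def mIball [TopologicalSpace X] (I : Ideal C(X, ℝ)) (f u : C(X, ℝ)) :
    Set C(X, ℝ) :=
  {g | (∀ x, |f x - g x| < u x) ∧ f - g ∈ I}

/-- The `m^I`-topology on `C(X, ℝ)`. -/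
def mItop [TopologicalSpace X] (I : Ideal C(X, ℝ)) : TopologicalSpace C(X, ℝ) :=
  generateFrom {S | ∃ f u, (∀ x, 0 < u x) ∧ S = mIball I f u}

/-- The topology of uniform convergence (`U`-topology) on `C(X, ℝ)`. -/
def Utop [TopologicalSpace X] : TopologicalSpace C(X, ℝ) :=
  generateFrom {S | ∃ (f : C(X, ℝ)) (ε : ℝ), 0 < ε ∧
    S = {g | supDist f g < ENNReal.ofReal ε}}

/-- The `m`-topology on `C(X, ℝ)`. -/
def mtop [TopologicalSpace X] : TopologicalSpace C(X, ℝ) :=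
  generateFrom {S | ∃ (f u : C(X, ℝ)), (∀ x, 0 < u x) ∧
    S = {g | ∀ x, |f x - g x| < u x}}

/-- The bounded continuous functions `C*(X)` as a subset of `C(X, ℝ)`. -/
def Cstar [TopologicalSpace X] : Set C(X, ℝ) :=
  {f | ∃ M : ℝ, ∀ x, |f x| ≤ M}

lemma supDist_triangle' [TopologicalSpace X] (f g k : C(X, ℝ)) :
    supDist f g ≤ supDist f k + supDist k g := by
  refine iSup_le fun x => ?_
  calc (‖f x - g x‖₊ : ℝ≥0∞) ≤ (‖f x - k x‖₊ : ℝ≥0∞) + ‖k x - g x‖₊ := by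
        rw [← ENNReal.coe_add]
        exact_mod_cast (by simpa using nnnorm_add_le (f x - k x) (k x - g x))
    _ ≤ supDist f k + supDist k g :=
        add_le_add (le_iSup (fun x => (‖f x - k x‖₊ : ℝ≥0∞)) x)
          (le_iSup (fun x => (‖k x - g x‖₊ : ℝ≥0∞)) x)

lemma UIball_mono [TopologicalSpace X] (J : Ideal C(X, ℝ)) (f : C(X, ℝ))
    {δ δ' : ℝ} (h : δ ≤ δ') : UIball J f δ ⊆ UIball J f δ' :=
  fun _ hg => ⟨hg.1.trans_le (ENNReal.ofReal_le_ofReal h), hg.2⟩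

lemma UItop_basis [TopologicalSpace X] (J : Ideal C(X, ℝ)) {S : Set C(X, ℝ)}
    (hS : TopologicalSpace.GenerateOpen
      {S | ∃ f ε, 0 < ε ∧ S = UIball J f ε} S) :
    ∀ f ∈ S, ∃ δ > 0, UIball J f δ ⊆ S := by
  induction hS with
  | basic S hS =>
      obtain ⟨h, ε, hε, rfl⟩ := hS
      rintro f ⟨hd, hm⟩
      have hfin : supDist h f ≠ ⊤ := (hd.trans_le le_top).ne
      set d := (supDist h f).toReal with hdd
      have hde : supDist h f = ENNReal.ofReal d := by
        rw [hdd, ENNReal.ofReal_toReal hfin]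
      have hdlt : d < ε := by
        have := (ENNReal.lt_ofReal_iff_toReal_lt hfin).mp hd
        simpa [hdd] using this
      have hd0 : 0 ≤ d := ENNReal.toReal_nonneg
      refine ⟨ε - d, by linarith, ?_⟩
      rintro g ⟨hg1, hg2⟩
      refine ⟨?_, ?_⟩
      · calc supDist h g ≤ supDist h f + supDist f g := supDist_triangle' h g f
          _ < ENNReal.ofReal d + ENNReal.ofReal (ε - d) := by
              rw [hde]
              exact ENNReal.add_lt_add_left (by simp) hg1
          _ = ENNReal.ofReal ε := by
              rw [← ENNReal.ofReal_add hd0 (by linarith)]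
              ring_nf
      · have : h - g = (h - f) + (f - g) := by ring
        rw [this]; exact J.add_mem hm hg2
  | univ => exact fun f _ => ⟨1, one_pos, fun g _ => trivial⟩
  | inter S T _ _ ihS ihT =>
      rintro f ⟨hf1, hf2⟩
      obtain ⟨δ1, hδ1, hs1⟩ := ihS f hf1
      obtain ⟨δ2, hδ2, hs2⟩ := ihT f hf2
      exact ⟨min δ1 δ2, lt_min hδ1 hδ2, fun g hg =>
        ⟨hs1 (UIball_mono J f (min_le_left _ _) hg),
         hs2 (UIball_mono J f (min_le_right _ _) hg)⟩⟩
  | sUnion 𝒮 _ ih =>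
      rintro f ⟨S, hS𝒮, hfS⟩
      obtain ⟨δ, hδ, hsub⟩ := ih S hS𝒮 f hfS
      exact ⟨δ, hδ, fun g hg => ⟨S, hS𝒮, hsub hg⟩⟩

lemma UItop_le_of_eq [TopologicalSpace X] (I J : Ideal C(X, ℝ))
    (htop : UItop I = UItop J) : J ≤ I := by
  intro h hJ
  -- UIball I 0 1 is open in UItop I = UItop J
  have hopen : TopologicalSpace.GenerateOpen
      {S | ∃ f ε, 0 < ε ∧ S = UIball J f ε} (UIball I 0 1) := by
    have h1 : @IsOpen _ (UItop I) (UIball I 0 1) :=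
      TopologicalSpace.GenerateOpen.basic _ ⟨0, 1, one_pos, rfl⟩
    have h2 : @IsOpen _ (UItop J) (UIball I 0 1) := htop ▸ h1
    exact h2
  have h0 : (0 : C(X, ℝ)) ∈ UIball I 0 1 := by
    constructor
    · simp [supDist]
    · simp
  obtain ⟨δ, hδ, hsub⟩ := UItop_basis J hopen 0 h0
  -- the shrunk function c * h
  set c : C(X, ℝ) := ⟨fun x => δ / 2 * (1 + |h x|)⁻¹,
    (continuous_const.mul ((continuous_const.add h.continuous.abs).inv₀
      (fun x => (by positivity : (0:ℝ) < 1 + |h x|).ne')))⟩ with hc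
  set g : C(X, ℝ) := c * h with hgdef
  have hden : ∀ x : X, (0 : ℝ) < 1 + |h x| := fun x => by positivity
  have hgJ : g ∈ J := J.mul_mem_left c hJ
  have hgbd : ∀ x, |g x| ≤ δ / 2 := by
    intro x
    have hx := hden x
    have : |g x| = δ / 2 * (|h x| / (1 + |h x|)) := by
      simp only [hgdef, hc, ContinuousMap.mul_apply, ContinuousMap.coe_mk]
      rw [abs_mul, abs_of_nonneg (by positivity : (0:ℝ) ≤ δ / 2 * (1 + |h x|)⁻¹)]
      ring
    rw [this]
    have h1 : |h x| / (1 + |h x|) ≤ 1 := by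
      rw [div_le_one hx]; linarith
    nlinarith [abs_nonneg (h x)]
  have hgball : g ∈ UIball J 0 δ := by
    constructor
    · have : supDist 0 g ≤ ENNReal.ofReal (δ / 2) := by
        refine iSup_le fun x => ?_
        rw [← enorm_eq_nnnorm, ← ofReal_norm]
        exact ENNReal.ofReal_le_ofReal (by simpa using hgbd x)
      exact this.trans_lt (ENNReal.ofReal_lt_ofReal_iff hδ |>.mpr (by linarith))
    · simpa using J.neg_mem hgJ
  have hgI : g ∈ I := by
    have := (hsub hgball).2
    simpa using I.neg_mem this
  -- recover h from g
  set d : C(X, ℝ) := ⟨fun x => 2 / δ * (1 + |h x|),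
    continuous_const.mul (continuous_const.add h.continuous.abs)⟩ with hd
  have key : h = d * g := by
    ext x
    simp only [hgdef, hc, hd, ContinuousMap.mul_apply, ContinuousMap.coe_mk]
    have hx := hden x
    field_simp
  rw [key]
  exact I.mul_mem_left d hgI

theorem stmt1 [TopologicalSpace X] [T2Space X] [CompletelyRegularSpace X]
    (I J : Ideal C(X, ℝ)) (h : I ≠ J) : UItop I ≠ UItop J := by
  intro htop
  exact h (le_antisymm (UItop_le_of_eq J I htop.symm) (UItop_le_of_eq I J htop))
end

section
/- For an ideal I of C(X), C(X) equipped with the U^I-topology is a topological vector space over ℝ if and only if I = C(X) and X is pseudocompact. -/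
open TopologicalSpace
open scoped ENNReal NNReal

variable {X : Type*}

section Aux
variable [TopologicalSpace X]

lemma supDist_self (f : C(X, ℝ)) : supDist f f = 0 :=
  le_antisymm (iSup_le fun x => by simp) zero_le

lemma abs_lt_of_supDist_lt {f g : C(X, ℝ)} {ε : ℝ}
    (h : supDist f g < ENNReal.ofReal ε) (x : X) : |f x - g x| < ε := by
  have hx : (‖f x - g x‖₊ : ℝ≥0∞) < ENNReal.ofReal ε :=
    (le_iSup (fun x => (‖f x - g x‖₊ : ℝ≥0∞)) x).trans_lt h
  rw [← enorm_eq_nnnorm, Real.enorm_eq_ofReal_abs] at hx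
  by_contra hle
  exact absurd (ENNReal.ofReal_le_ofReal (not_lt.1 hle)) (not_le.2 hx)

lemma abs_le_of_supDist_le {f g : C(X, ℝ)} {c : ℝ} (hc : 0 ≤ c)
    (h : supDist f g ≤ ENNReal.ofReal c) (x : X) : |f x - g x| ≤ c := by
  have hx : (‖f x - g x‖₊ : ℝ≥0∞) ≤ ENNReal.ofReal c :=
    (le_iSup (fun x => (‖f x - g x‖₊ : ℝ≥0∞)) x).trans h
  rw [← enorm_eq_nnnorm, Real.enorm_eq_ofReal_abs] at hx
  exact (ENNReal.ofReal_le_ofReal_iff hc).1 hx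

lemma supDist_le_ofReal {f g : C(X, ℝ)} {c : ℝ}
    (h : ∀ x, |f x - g x| ≤ c) : supDist f g ≤ ENNReal.ofReal c :=
  iSup_le fun x => by
    rw [← enorm_eq_nnnorm, Real.enorm_eq_ofReal_abs]; exact ENNReal.ofReal_le_ofReal (h x)

lemma isOpen_UIball (I : Ideal C(X, ℝ)) (f : C(X, ℝ)) {ε : ℝ} (hε : 0 < ε) :
    @IsOpen _ (UItop I) (UIball I f ε) :=
  isOpen_generateFrom_of_mem ⟨f, ε, hε, rfl⟩

lemma self_mem_UIball (I : Ideal C(X, ℝ)) (f : C(X, ℝ)) {ε : ℝ} (hε : 0 < ε) :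
    f ∈ UIball I f ε :=
  ⟨by rw [supDist_self]; exact ENNReal.ofReal_pos.2 hε, by simp⟩

end Aux

set_option maxHeartbeats 1000000 in
theorem stmt3 [TopologicalSpace X] [T2Space X] [CompletelyRegularSpace X]
    (I : Ideal C(X, ℝ)) :
    (@ContinuousAdd C(X, ℝ) (UItop I) _ ∧ @ContinuousSMul ℝ C(X, ℝ) _ _ (UItop I)) ↔
      (I = ⊤ ∧ ∀ f : C(X, ℝ), ∃ M : ℝ, ∀ x, |f x| ≤ M) := by
  constructor
  · rintro ⟨-, hs⟩
    letI := UItop I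
    haveI := hs
    have key : ∀ f : C(X, ℝ), ∃ t : ℝ, 0 < t ∧ t • f ∈ I ∧ ∀ x, |t * f x| < 1 := by
      intro f
      have hc : Continuous (fun p : ℝ × C(X, ℝ) => p.1 • p.2) := continuous_smul
      have h0 : UIball I 0 1 ∈ nhds ((0 : ℝ) • f) := by
        rw [zero_smul]
        exact (isOpen_UIball I 0 one_pos).mem_nhds (self_mem_UIball I 0 one_pos)
      have hpre := (hc.tendsto ((0 : ℝ), f)) h0
      rw [Filter.mem_map, nhds_prod_eq, Filter.mem_prod_iff] at hpre
      obtain ⟨s, hs0, V, hVf, hsub⟩ := hpre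
      obtain ⟨δ, hδ, hball⟩ := Metric.mem_nhds_iff.1 hs0
      have hts : (δ / 2) ∈ s := by
        apply hball
        rw [Metric.mem_ball, Real.dist_eq, sub_zero, abs_of_pos (by linarith)]
        linarith
      have hmem := hsub (Set.mk_mem_prod hts (mem_of_mem_nhds hVf))
      simp only [Set.mem_preimage] at hmem
      obtain ⟨hd, hI⟩ := hmem
      rw [zero_sub, neg_mem_iff] at hI
      refine ⟨δ / 2, by linarith, hI, fun x => ?_⟩
      have := abs_lt_of_supDist_lt hd x
      simpa using this
    constructor
    · rw [eq_top_iff]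
      intro f _
      obtain ⟨t, ht, htI, -⟩ := key f
      have hf : f = t⁻¹ • (t • f) := by
        rw [smul_smul, inv_mul_cancel₀ ht.ne', one_smul]
      rw [hf, Algebra.smul_def]
      exact Ideal.mul_mem_left _ _ htI
    · intro f
      obtain ⟨t, ht, -, habs⟩ := key f
      refine ⟨1 / t, fun x => ?_⟩
      rw [le_div_iff₀ ht]
      have h1 := habs x
      rw [abs_mul, abs_of_pos ht] at h1
      nlinarith [abs_nonneg (f x)]
  · rintro ⟨rfl, hbd⟩
    letI := UItop (⊤ : Ideal C(X, ℝ))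
    constructor
    · constructor
      refine continuous_generateFrom_iff.mpr ?_
      rintro S ⟨f, ε, hε, rfl⟩
      rw [isOpen_prod_iff]
      rintro g h ⟨hlt, -⟩
      set d := (supDist f (g + h)).toReal with hdd
      have hfin : supDist f (g + h) ≠ ⊤ := (hlt.trans ENNReal.ofReal_lt_top).ne
      have hdlt : d < ε := (ENNReal.lt_ofReal_iff_toReal_lt hfin).1 hlt
      have hd0 : 0 ≤ d := ENNReal.toReal_nonneg
      have hδ : 0 < (ε - d) / 4 := by linarith
      refine ⟨UIball ⊤ g ((ε - d) / 4), UIball ⊤ h ((ε - d) / 4),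
        isOpen_UIball _ _ hδ, isOpen_UIball _ _ hδ,
        self_mem_UIball _ _ hδ, self_mem_UIball _ _ hδ, ?_⟩
      rintro ⟨g', h'⟩ ⟨⟨hg', -⟩, hh', -⟩
      refine ⟨?_, Submodule.mem_top⟩
      have hpt : ∀ x, |f x - (g' + h') x| ≤ d + 2 * ((ε - d) / 4) := by
        intro x
        have h1 : |f x - (g + h) x| ≤ d := by
          refine abs_le_of_supDist_le hd0 ?_ x
          rw [hdd, ENNReal.ofReal_toReal hfin]
        have h2 := abs_lt_of_supDist_lt hg' x
        have h3 := abs_lt_of_supDist_lt hh' x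
        have e : f x - (g' + h') x =
            (f x - (g + h) x) + ((g x - g' x) + (h x - h' x)) := by
          simp only [ContinuousMap.add_apply]; ring
        rw [e]
        calc |(f x - (g + h) x) + ((g x - g' x) + (h x - h' x))|
            ≤ |f x - (g + h) x| + |(g x - g' x) + (h x - h' x)| := abs_add_le _ _
          _ ≤ |f x - (g + h) x| + (|g x - g' x| + |h x - h' x|) := by
              exact add_le_add le_rfl (abs_add_le _ _)
          _ ≤ d + 2 * ((ε - d) / 4) := by linarith
      calc supDist f (g' + h') ≤ ENNReal.ofReal (d + 2 * ((ε - d) / 4)) :=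
            supDist_le_ofReal hpt
        _ < ENNReal.ofReal ε := (ENNReal.ofReal_lt_ofReal_iff hε).2 (by linarith)
    · constructor
      refine continuous_generateFrom_iff.mpr ?_
      rintro S ⟨f, ε, hε, rfl⟩
      rw [isOpen_prod_iff]
      rintro t₀ g₀ ⟨hlt, -⟩
      set d := (supDist f (t₀ • g₀)).toReal with hdd
      have hfin : supDist f (t₀ • g₀) ≠ ⊤ := (hlt.trans ENNReal.ofReal_lt_top).ne
      have hdlt : d < ε := (ENNReal.lt_ofReal_iff_toReal_lt hfin).1 hlt
      have hd0 : 0 ≤ d := ENNReal.toReal_nonneg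
      obtain ⟨M₀, hM₀⟩ := hbd g₀
      set M : ℝ := max M₀ 0 with hMdef
      have hM : ∀ x, |g₀ x| ≤ M := fun x => (hM₀ x).trans (le_max_left _ _)
      have hM0 : 0 ≤ M := le_max_right _ _
      set K : ℝ := |t₀| + M + 1 with hKdef
      have hK : 0 < K := by
        have := abs_nonneg t₀; rw [hKdef]; linarith
      set r : ℝ := ε - d with hrdef
      have hr : 0 < r := by rw [hrdef]; linarith
      set δ : ℝ := min 1 (r / (2 * K)) with hδdef
      have hδ : 0 < δ := lt_min one_pos (by positivity)
      have hδ1 : δ ≤ 1 := min_le_left _ _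
      have hδK : δ * K ≤ r / 2 := by
        have h2 : δ ≤ r / (2 * K) := min_le_right _ _
        have := mul_le_mul_of_nonneg_right h2 hK.le
        calc δ * K ≤ (r / (2 * K)) * K := this
          _ = r / 2 := by field_simp
      refine ⟨Metric.ball t₀ δ, UIball ⊤ g₀ δ, Metric.isOpen_ball,
        isOpen_UIball _ _ hδ, Metric.mem_ball_self hδ, self_mem_UIball _ _ hδ, ?_⟩
      rintro ⟨t, g⟩ ⟨htb, hg, -⟩
      refine ⟨?_, Submodule.mem_top⟩
      have ht : |t₀ - t| ≤ δ := by
        rw [Metric.mem_ball, Real.dist_eq] at htb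
        rw [abs_sub_comm]; exact htb.le
      have hpt : ∀ x, |f x - (t • g) x| ≤ d + r / 2 := by
        intro x
        have h1 : |f x - (t₀ • g₀) x| ≤ d := by
          refine abs_le_of_supDist_le hd0 ?_ x
          rw [hdd, ENNReal.ofReal_toReal hfin]
        simp only [ContinuousMap.smul_apply, smul_eq_mul] at h1 ⊢
        have h2 : |g₀ x - g x| ≤ δ := (abs_lt_of_supDist_lt hg x).le
        have hgx : |g x| ≤ M + δ := by
          have h4 := abs_sub_abs_le_abs_sub (g x) (g₀ x)
          rw [abs_sub_comm] at h4
          have := hM x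
          linarith
        have e : f x - t * g x =
            (f x - t₀ * g₀ x) + (t₀ * (g₀ x - g x) + (t₀ - t) * g x) := by ring
        rw [e]
        have b1 := abs_add_le (f x - t₀ * g₀ x) (t₀ * (g₀ x - g x) + (t₀ - t) * g x)
        have b2 := abs_add_le (t₀ * (g₀ x - g x)) ((t₀ - t) * g x)
        rw [abs_mul, abs_mul] at b2
        have c1 : |t₀| * |g₀ x - g x| ≤ |t₀| * δ :=
          mul_le_mul_of_nonneg_left h2 (abs_nonneg _)
        have c2 : |t₀ - t| * |g x| ≤ δ * (M + δ) :=
          mul_le_mul ht hgx (abs_nonneg _) hδ.le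
        have c3 : |t₀| * δ + δ * (M + δ) ≤ r / 2 := by
          have hδδ : δ * (1 - δ) ≥ 0 := mul_nonneg hδ.le (by linarith)
          have hKexp : δ * K = δ * |t₀| + δ * M + δ := by rw [hKdef]; ring
          nlinarith
        linarith
      calc supDist f (t • g) ≤ ENNReal.ofReal (d + r / 2) := supDist_le_ofReal hpt
        _ < ENNReal.ofReal ε :=
            (ENNReal.ofReal_lt_ofReal_iff hε).2 (by rw [hrdef]; linarith)
end

section
/- If U(X), the set of units of C(X), is dense in C(X) with the topology of uniform convergence, then X is strongly zero-dimensional. -/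
open TopologicalSpace
open scoped ENNReal NNReal

variable {X : Type*}

theorem stmt11 [TopologicalSpace X] [T2Space X] [CompletelyRegularSpace X]
    (h : @Dense C(X, ℝ) Utop {u : C(X, ℝ) | ∀ x, u x ≠ 0}) :
    ∀ Z Z' : Set X, (∃ f : C(X, ℝ), Z = f ⁻¹' {0}) →
      (∃ g : C(X, ℝ), Z' = g ⁻¹' {0}) → Disjoint Z Z' →
        ∃ C : Set X, IsClopen C ∧ Z ⊆ C ∧ C ⊆ Z'ᶜ := by
  rintro Z Z' ⟨f, rfl⟩ ⟨g, rfl⟩ hd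
  have pos : ∀ x, 0 < |f x| + |g x| := by
    intro x
    rcases lt_or_eq_of_le (add_nonneg (abs_nonneg (f x)) (abs_nonneg (g x))) with hp | hp
    · exact hp
    · exfalso
      have ha := abs_nonneg (f x)
      have hb := abs_nonneg (g x)
      have hf : f x = 0 := abs_eq_zero.mp (by linarith)
      have hg : g x = 0 := abs_eq_zero.mp (by linarith)
      exact hd.ne_of_mem (show x ∈ f ⁻¹' {0} from hf) (show x ∈ g ⁻¹' {0} from hg) rfl
  set φ : C(X, ℝ) := ⟨fun x => |f x| / (|f x| + |g x|) - 1/2,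
    ((continuous_abs.comp f.continuous).div
      ((continuous_abs.comp f.continuous).add (continuous_abs.comp g.continuous))
      (fun x => (pos x).ne')).sub continuous_const⟩ with hφ
  set B : Set C(X, ℝ) := {g | supDist φ g < ENNReal.ofReal (1/2)} with hB
  have hBopen : @IsOpen _ Utop B :=
    TopologicalSpace.GenerateOpen.basic B ⟨φ, 1/2, by norm_num, rfl⟩
  have hφB : φ ∈ B := by
    simp only [hB, Set.mem_setOf_eq, supDist, sub_self, nnnorm_zero, ENNReal.coe_zero,
      iSup_const, ENNReal.coe_zero]
    simp [ENNReal.ofReal_pos]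
  obtain ⟨u, huB, hu⟩ := (@mem_closure_iff C(X, ℝ) Utop φ _).mp (h φ) B hBopen hφB
  have hpt : ∀ x, |φ x - u x| < 1/2 := by
    intro x
    have h1 : (‖φ x - u x‖₊ : ℝ≥0∞) < ENNReal.ofReal (1/2) :=
      lt_of_le_of_lt (le_iSup (fun x => (‖φ x - u x‖₊ : ℝ≥0∞)) x) huB
    rw [show (‖φ x - u x‖₊ : ℝ≥0∞) = ENNReal.ofReal ‖φ x - u x‖ from (ofReal_norm (φ x - u x)).symm] at h1
    rw [ENNReal.ofReal_lt_ofReal_iff (by norm_num)] at h1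
    simpa [Real.norm_eq_abs] using h1
  refine ⟨{x | u x < 0}, ⟨?_, isOpen_lt u.continuous continuous_const⟩, ?_, ?_⟩
  · have : {x | u x < 0} = {x | u x ≤ 0} := by
      ext x
      simp only [Set.mem_setOf_eq]
      constructor
      · exact le_of_lt
      · intro hx; exact lt_of_le_of_ne hx (hu x)
    rw [this]
    exact isClosed_le u.continuous continuous_const
  · intro x hx
    have hfx : f x = 0 := hx
    have hφx : φ x = -(1/2) := by
      simp only [hφ, ContinuousMap.coe_mk, hfx, abs_zero, zero_div]
      ring
    have := hpt x
    rw [hφx] at this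
    have := abs_lt.mp this
    simp only [Set.mem_setOf_eq]
    linarith [this.1, this.2]
  · intro x hx hx'
    have hgx : g x = 0 := hx'
    have hφx : φ x = 1/2 := by
      have hfpos : |f x| ≠ 0 := by
        have hp := pos x
        rw [hgx, abs_zero, add_zero] at hp
        exact hp.ne'
      simp only [hφ, ContinuousMap.coe_mk, hgx, abs_zero, add_zero,
        div_self hfpos]
      ring
    have := hpt x
    rw [hφx] at this
    have := abs_lt.mp this
    simp only [Set.mem_setOf_eq] at hx
    linarith [this.1, this.2]
end

section
/- X is a weakly P-space if and only if X is pseudocompact and an almost P-space. -/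
theorem stmt15 {X : Type*} [TopologicalSpace X] [T2Space X] [CompletelyRegularSpace X] :
    (∀ f : C(X, ℝ), (∀ ε : ℝ, 0 < ε → ∃ x, |f x| < ε) →
        (interior (f ⁻¹' {0})).Nonempty) ↔
      ((∀ f : C(X, ℝ), ∃ M : ℝ, ∀ x, |f x| ≤ M) ∧
        (∀ f : C(X, ℝ), (f ⁻¹' {0}).Nonempty → (interior (f ⁻¹' {0})).Nonempty)) := by
  constructor
  · intro h
    constructor
    · intro f
      by_contra hM
      push_neg at hM
      have hpos : ∀ x : X, (0 : ℝ) < 1 + |f x| := fun x => by positivity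
      set g : C(X, ℝ) := ⟨fun x => (1 + |f x|)⁻¹,
        (Continuous.inv₀ (by continuity) (fun x => (hpos x).ne'))⟩ with hg
      have hsmall : ∀ ε : ℝ, 0 < ε → ∃ x, |g x| < ε := by
        intro ε hε
        obtain ⟨x, hx⟩ := hM ε⁻¹
        refine ⟨x, ?_⟩
        have h1 : (1 : ℝ)/ε < 1 + |f x| := by
          rw [one_div]
          linarith
        have h2 : g x = (1 + |f x|)⁻¹ := rfl
        rw [h2, abs_of_pos (inv_pos.mpr (hpos x))]
        calc (1 + |f x|)⁻¹ < ((1:ℝ)/ε)⁻¹ := by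
              apply inv_strictAnti₀ (by positivity) h1
          _ = ε := by field_simp
      obtain ⟨y, hy⟩ := h g hsmall
      have : y ∈ g ⁻¹' {0} := interior_subset hy
      have : g y = 0 := this
      have : (1 + |f y|)⁻¹ = 0 := this
      exact absurd this (inv_ne_zero (hpos y).ne')
    · intro f ⟨x, hx⟩
      apply h
      intro ε hε
      exact ⟨x, by simp only [Set.mem_preimage, Set.mem_singleton_iff] at hx; rw [hx]; simpa⟩
  · rintro ⟨hb, hap⟩ f hf
    apply hap
    by_contra hz
    rw [Set.not_nonempty_iff_eq_empty] at hz
    have hne : ∀ x : X, f x ≠ 0 := by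
      intro x hx
      have : x ∈ f ⁻¹' {0} := by simp [hx]
      simp [hz] at this
    have habs : ∀ x : X, (0:ℝ) < |f x| := fun x => abs_pos.mpr (hne x)
    set g : C(X, ℝ) := ⟨fun x => |f x|⁻¹,
      (Continuous.inv₀ (by continuity) (fun x => (habs x).ne'))⟩ with hg
    obtain ⟨M, hMg⟩ := hb g
    have hε : (0:ℝ) < (max M 0 + 1)⁻¹ := by positivity
    obtain ⟨x, hx⟩ := hf _ hε
    have hgx : g x = |f x|⁻¹ := rfl
    have h1 : max M 0 + 1 < |f x|⁻¹ := by
      rw [← inv_inv (max M 0 + 1)]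
      exact inv_strictAnti₀ (habs x) hx
    have h2 : |g x| ≤ M := hMg x
    have h3 : g x ≤ M := (abs_le.mp h2).2
    rw [hgx] at h3
    have : M < max M 0 + 1 := by
      have := le_max_left M 0; linarith
    linarith
end

section
/- Let 𝒫 be an ideal of closed sets in X. Then the closure of C_𝒫(X) in C(X) with the m-topology equals I_𝒫 = {f ∈ C(X) : f·g ∈ C_∞^𝒫(X) for every g ∈ C(X)}. -/
open TopologicalSpace
open scoped ENNReal NNReal

variable {X : Type*}

/-- `C_∞^𝒫(X)`. -/
def CinfP [TopologicalSpace X] (P : Set (Set X)) : Set C(X, ℝ) :=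
  {f | ∀ n : ℕ, 0 < n → {x | 1 / (n : ℝ) ≤ |f x|} ∈ P}

theorem mem_closure_iff19 {A : Type*} (t : TopologicalSpace A) {s : Set A} {a : A} :
    a ∈ @closure A t s ↔ ∀ o, @IsOpen A t o → a ∈ o → (o ∩ s).Nonempty := by
  letI := t
  exact mem_closure_iff

theorem ball_sub19 [TopologicalSpace X] {O : Set C(X, ℝ)}
    (hO : TopologicalSpace.GenerateOpen
      {S | ∃ (f u : C(X, ℝ)), (∀ x, 0 < u x) ∧ S = {g | ∀ x, |f x - g x| < u x}} O) :
    ∀ f ∈ O, ∃ u : C(X, ℝ), (∀ x, 0 < u x) ∧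
      {g : C(X, ℝ) | ∀ x, |f x - g x| < u x} ⊆ O := by
  induction hO with
  | basic S hS =>
    intro f hf
    obtain ⟨f1, u1, hu1, rfl⟩ := hS
    refine ⟨⟨fun x => u1 x - |f1 x - f x|, by fun_prop⟩, fun x => ?_, fun g hg x => ?_⟩
    · simpa using sub_pos.mpr (hf x)
    · have h1 := hg x
      simp only [ContinuousMap.coe_mk] at h1
      calc |f1 x - g x| ≤ |f1 x - f x| + |f x - g x| := abs_sub_le _ _ _
        _ < u1 x := by linarith
  | univ => exact fun f _ => ⟨1, fun x => by simp, Set.subset_univ _⟩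
  | inter s t _ _ ihs iht =>
    intro f hf
    obtain ⟨u1, hu1, h1⟩ := ihs f hf.1
    obtain ⟨u2, hu2, h2⟩ := iht f hf.2
    refine ⟨⟨fun x => min (u1 x) (u2 x), by fun_prop⟩,
      fun x => lt_min (hu1 x) (hu2 x), fun g hg => ⟨h1 fun x => ?_, h2 fun x => ?_⟩⟩
    · exact lt_of_lt_of_le (hg x) (min_le_left _ _)
    · exact lt_of_lt_of_le (hg x) (min_le_right _ _)
  | sUnion S hS ih =>
    intro f hf
    obtain ⟨t, htS, hft⟩ := hf
    obtain ⟨u, hu, hsub⟩ := ih t htS f hft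
    exact ⟨u, hu, hsub.trans (Set.subset_sUnion_of_mem htS)⟩

theorem stmt19 [TopologicalSpace X] [T2Space X] [CompletelyRegularSpace X]
    (P : Set (Set X)) (hclosed : ∀ E ∈ P, IsClosed E)
    (hunion : ∀ E ∈ P, ∀ F ∈ P, E ∪ F ∈ P)
    (hsub : ∀ E ∈ P, ∀ C : Set X, IsClosed C → C ⊆ E → C ∈ P) :
    @closure C(X, ℝ) mtop {f : C(X, ℝ) | closure {x | f x ≠ 0} ∈ P} =
      {f : C(X, ℝ) | ∀ g : C(X, ℝ), f * g ∈ CinfP P} := by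
  ext f
  simp only [Set.mem_setOf_eq]
  constructor
  · -- closure ⊆ RHS
    intro hf g n hn
    by_contra hS
    have hN : (0:ℝ) < n := by exact_mod_cast hn
    have hdpos : ∀ x, (0:ℝ) < 2 * n * (|g x| + 1) := fun x =>
      mul_pos (by linarith) (by positivity)
    set u : C(X, ℝ) := ⟨fun x => 1 / (2 * n * (|g x| + 1)),
      continuous_const.div (by fun_prop) fun x => (hdpos x).ne'⟩ with hu
    have hupos : ∀ x, 0 < u x := fun x => by
      simp only [hu, ContinuousMap.coe_mk]
      positivity
    have hopen : @IsOpen C(X, ℝ) mtop {h : C(X, ℝ) | ∀ x, |f x - h x| < u x} :=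
      TopologicalSpace.isOpen_generateFrom_of_mem ⟨f, u, hupos, rfl⟩
    obtain ⟨h, hh1, hh2⟩ := (mem_closure_iff19 mtop).mp hf _ hopen
      (fun x => by simpa using hupos x)
    simp only [Set.mem_setOf_eq] at hh1 hh2
    apply hS
    have hSsub : {x | 1 / (n : ℝ) ≤ |(f * g) x|} ⊆ {x | h x ≠ 0} := by
      intro x hx
      simp only [Set.mem_setOf_eq, ContinuousMap.mul_apply, abs_mul] at hx ⊢
      intro h0
      have hb := hh1 x
      rw [h0, sub_zero] at hb
      simp only [hu, ContinuousMap.coe_mk] at hb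
      have h1 : 2 ≤ |f x| * (2 * n * (|g x| + 1)) := by
        rw [div_le_iff₀ hN] at hx
        nlinarith [abs_nonneg (f x), abs_nonneg (g x),
          mul_nonneg (abs_nonneg (f x)) hN.le]
      have h2 : |f x| * (2 * n * (|g x| + 1)) < 1 :=
        (lt_div_iff₀ (hdpos x)).mp hb
      linarith
    have hScl : IsClosed {x | 1 / (n : ℝ) ≤ |(f * g) x|} :=
      isClosed_le continuous_const ((f * g).continuous.abs)
    exact hsub _ hh2 _ hScl (hSsub.trans subset_closure)
  · -- RHS ⊆ closure
    intro hf
    rw [mem_closure_iff19 mtop]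
    intro O hO hfO
    obtain ⟨u, hu, hball⟩ := ball_sub19 hO f hfO
    set g : C(X, ℝ) := ⟨fun x => f x - max (min (f x) (u x / 2)) (-(u x / 2)),
      by fun_prop⟩ with hgdef
    have hsmall : ∀ x, |f x| < u x / 2 → g x = 0 := by
      intro x hx
      rw [abs_lt] at hx
      simp only [hgdef, ContinuousMap.coe_mk]
      rw [min_eq_left hx.2.le, max_eq_left (by linarith), sub_self]
    refine ⟨g, hball fun x => ?_, ?_⟩
    · simp only [hgdef, ContinuousMap.coe_mk]
      have h1 : min (f x) (u x / 2) ≤ u x / 2 := min_le_right _ _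
      have h2 : -(u x / 2) ≤ max (min (f x) (u x / 2)) (-(u x / 2)) := le_max_right _ _
      have h3 : max (min (f x) (u x / 2)) (-(u x / 2)) ≤ u x / 2 :=
        max_le h1 (by linarith [hu x])
      rw [abs_lt]
      constructor <;> [skip; skip] <;> nlinarith [hu x]
    · simp only [Set.mem_setOf_eq]
      set v : C(X, ℝ) := ⟨fun x => 2 / u x,
        continuous_const.div u.continuous fun x => (hu x).ne'⟩ with hv
      have hvP := hf v 1 one_pos
      apply hsub _ hvP _ isClosed_closure
      apply closure_minimal
      · intro x hx
        simp only [Set.mem_setOf_eq] at hx ⊢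
        have hfx : u x / 2 ≤ |f x| := by
          by_contra hcon
          exact hx (hsmall x (not_le.mp hcon))
        simp only [ContinuousMap.mul_apply, hv, ContinuousMap.coe_mk, Nat.cast_one]
        rw [abs_mul, abs_of_pos (div_pos two_pos (hu x)),
          ← mul_div_assoc, one_div_one, le_div_iff₀ (hu x)]
        linarith
      · exact isClosed_le continuous_const ((f * v).continuous.abs)
end
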